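/- Divergence and reduction of the infinite Jackson integral of E_q(−t): let γ > 0. (a) If γ ≠ q^j/(1−q) for every j ∈ ℤ, then the bilateral series ∑_{k=−∞}^{∞} E_q(−q^k γ) q^k does not converge (its terms E_q(−q^k γ) q^k do not tend to 0 as k → −∞). (b) If γ = q^j/(1−q) for some j ∈ ℤ, then E_q(−q^k γ) = 0 for every k ∈ ℤ with k + j < 0, and (1−q) γ ∑_{k=−∞}^{∞} E_q(−q^k γ) q^k = ∑_{l=0}^∞ E_q(−q^l/(1−q)) q^l, i.e. ∫_0^{γ·∞} E_q(−t) d_q t = ∫_0^{1/(1−q)} E_q(−t) d_q t. -/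

import Mathlib

/-!
The q-difference equation `E_q(t) = (1 + (1-q)t) E_q(qt)` makes `u_k = E_q(-q^k γ)` satisfy
`u_k = (1 - (1-q) q^k γ) u_{k+1}` for `k ∈ ℤ`. If `γ = q^j/(1-q)`, the factor vanishes at
`k = -j`, so `u_k = 0` for all `k ≤ -j`, and shifting the index by `j` turns the bilateral
series into the unilateral one. Otherwise no factor vanishes, and since `u_k → E_q(0) = 1` as
`k → ∞`, no `u_k` vanishes; as `k → -∞` the factor exceeds `1 > q` in absolute value, so
`|u_k q^k|` does not decrease as `k` decreases and cannot tend to `0`.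
-/

open scoped BigOperators

noncomputable section

/-- The q-number `[u]_q = (q^u - 1)/(q - 1)`. -/
def qNum (q u : ℝ) : ℝ := (q ^ u - 1) / (q - 1)

/-- The q-factorial `[n]_q! = ∏_{i=1}^n [i]_q`. -/
def qFact (q : ℝ) (n : ℕ) : ℝ := ∏ i ∈ Finset.range n, qNum q ((i : ℝ) + 1)

/-- The q-Gamma function `Γ_q(t) = (1-q)^{1-t} ∏_{k=0}^∞ (1-q^{k+1})/(1-q^{k+t})`. -/
def qGamma (q t : ℝ) : ℝ :=
  (1 - q) ^ (1 - t) * ∏' k : ℕ, (1 - q ^ (k + 1)) / (1 - q ^ ((k : ℝ) + t))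

/-- The q-derivative `∂^q_t f(t) = (f(qt) - f(t))/((q-1)t)`.
The `q⁻¹`-derivative is `qDeriv q⁻¹`. -/
def qDeriv (q : ℝ) (f : ℝ → ℝ) (t : ℝ) : ℝ := (f (q * t) - f t) / ((q - 1) * t)

/-- The q-Pochhammer symbol `(a; q)_k = ∏_{l=0}^{k-1} (1 - a q^l)`. -/
def qPoch (a q : ℝ) (k : ℕ) : ℝ := ∏ l ∈ Finset.range k, (1 - a * q ^ l)

/-- The q-exponential `E_q(t) = ∑_{j=0}^∞ q^{j(j-1)/2} t^j/[j]_q!`. -/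
def qExpE (q t : ℝ) : ℝ := ∑' j : ℕ, q ^ (j * (j - 1) / 2) * t ^ j / qFact q j

/-- `e_q(-u) := 1/E_q(u)` (intended for `u ≥ 0`); `qExpe q u` denotes `e_q(-u)`. -/
def qExpe (q u : ℝ) : ℝ := (qExpE q u)⁻¹

/-- The first q-Bessel function `J^{(1)}_ν(x|q²)`. -/
def qBessel1 (q ν x : ℝ) : ℝ :=
  (x / (1 + q)) ^ ν *
    ∑' i : ℕ, (-1 : ℝ) ^ i / (qFact (q ^ 2) i * qGamma (q ^ 2) ((i : ℝ) + ν + 1)) *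
      (x / (1 + q)) ^ (2 * i)

/-- The second q-Bessel function `J^{(2)}_ν(x|q²)`. -/
def qBessel2 (q ν x : ℝ) : ℝ :=
  q ^ (ν ^ 2) * (x / (1 + q)) ^ ν *
    ∑' i : ℕ, q ^ (2 * (i : ℝ) * ((i : ℝ) + ν)) * (-1 : ℝ) ^ i /
        (qFact (q ^ 2) i * qGamma (q ^ 2) ((i : ℝ) + ν + 1)) *
      (x / (1 + q)) ^ (2 * i)

/-- The q-Laguerre polynomial `𝓛^{(α)}_j(u|q²)`. -/
def qLaguerre (q α : ℝ) (j : ℕ) (u : ℝ) : ℝ :=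
  ∑ i ∈ Finset.range (j + 1),
    q ^ ((j - i) * (j - i + 1)) * (-u) ^ i / (qFact (q ^ 2) (j - i) * qFact (q ^ 2) i) *
      (qPoch (q ^ (2 * (i : ℝ) + 2 * α + 2)) (q ^ 2) (j - i) / (1 - q ^ 2) ^ (j - i))

/-- The q-Laguerre polynomial `𝓛^{(α)}_j(u|q^{-2})`. -/
def qLaguerreInv (q α : ℝ) (j : ℕ) (u : ℝ) : ℝ :=
  q ^ (-(j : ℝ) * ((j : ℝ) + 1 + 2 * α)) *
    ∑ i ∈ Finset.range (j + 1),
      q ^ (2 * (i : ℝ) * ((i : ℝ) + α)) * (-u) ^ i / (qFact (q ^ 2) (j - i) * qFact (q ^ 2) i) *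
        (qPoch (q ^ (2 * (i : ℝ) + 2 * α + 2)) (q ^ 2) (j - i) / (1 - q ^ 2) ^ (j - i))

/-- The finite Jackson q-integral `∫_0^a f(t) d_q t = (1-q) a ∑_{k=0}^∞ f(q^k a) q^k`. -/
def jackson (q a : ℝ) (f : ℝ → ℝ) : ℝ := (1 - q) * a * ∑' k : ℕ, f (q ^ k * a) * q ^ k

/-- The infinite Jackson q-integral `∫_0^{γ·∞} f(t) d_q t = (1-q) γ ∑_{k=-∞}^∞ f(q^k γ) q^k`. -/
def jacksonInf (q γ : ℝ) (f : ℝ → ℝ) : ℝ := (1 - q) * γ * ∑' k : ℤ, f (q ^ k * γ) * q ^ k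

/-- The first q-Hankel transform `𝓗̄^{q,β}_ν`. -/
def hankel1 (q μ ν β : ℝ) (f : ℝ → ℝ) (t : ℝ) : ℝ :=
  (1 + q) / μ * jackson q (Real.sqrt (μ / ((1 - q ^ 2) * β)))
    (fun r => qBessel1 q ν ((1 + q) / μ * (r * t)) / (r * t) ^ ν * r ^ (2 * ν + 1) * f r)

/-- The second q-Hankel transform `𝓗^{q,γ}_ν`. -/
def hankel2 (q μ ν γ : ℝ) (f : ℝ → ℝ) (r : ℝ) : ℝ :=
  (1 + q) / μ * jacksonInf q γ
    (fun t => qBessel2 q ν (q * ((1 + q) / μ) * (r * t)) / (r * t) ^ ν * t ^ (2 * ν + 1) * f t)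


open Filter Topology Finset FormalMultilinearSeries

section IntRecurrence

variable {R : Type*} [MulZeroClass R] {u c : ℤ → R}

theorem eq_zero_of_le_of_forall_eq_mul_add_one (h : ∀ k, u k = c k * u (k + 1)) {k₀ : ℤ}
    (hc : c k₀ = 0) {k : ℤ} (hk : k ≤ k₀) : u k = 0 := by
  induction k, hk using Int.leInductionDown with
  | base => rw [h, hc, zero_mul]
  | pred k _ ih => rw [h, sub_add_cancel, ih, mul_zero]

theorem ne_zero_of_forall_eq_mul_add_one [NoZeroDivisors R] (h : ∀ k, u k = c k * u (k + 1))
    (hc : ∀ k, c k ≠ 0) (hu : ∃ᶠ k in atTop, u k ≠ 0) (k : ℤ) : u k ≠ 0 := by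
  obtain ⟨n, hkn, hn⟩ := frequently_atTop.1 hu k
  induction k, hkn using Int.leInductionDown with
  | base => exact hn
  | pred k _ ih => rw [h, sub_add_cancel]; exact mul_ne_zero (hc _) ih

end IntRecurrence

theorem not_tendsto_atBot_zero_of_norm_le_norm {E : Type*} [NormedAddGroup E] {A : ℤ → E}
    {K : ℤ} (hK : A K ≠ 0) (h : ∀ k < K, ‖A (k + 1)‖ ≤ ‖A k‖) :
    ¬ Tendsto A atBot (𝓝 0) := by
  have hle : ∀ k ≤ K, ‖A K‖ ≤ ‖A k‖ := by
    intro k hk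
    induction k, hk using Int.leInductionDown with
    | base => exact le_rfl
    | pred k hk ih => exact ih.trans (by simpa using h (k - 1) (by lia))
  intro hA
  obtain ⟨k, hkA, hkK⟩ := ((tendsto_zero_iff_norm_tendsto_zero.1 hA).eventually
    (gt_mem_nhds (norm_pos_iff.2 hK)) |>.and (eventually_le_atBot K)).exists
  exact (hle k hkK).not_gt hkA

section QExp

variable {q : ℝ}

theorem qNum_natCast_add_one (hq : q ≠ 1) (n : ℕ) :
    qNum q ((n : ℝ) + 1) = ∑ i ∈ range (n + 1), q ^ i := by
  rw [qNum, geom_sum_eq hq, ← Nat.cast_succ, Real.rpow_natCast]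

theorem one_le_qNum_natCast_add_one (hq0 : 0 ≤ q) (hq1 : q ≠ 1) (n : ℕ) :
    1 ≤ qNum q ((n : ℝ) + 1) := by
  rw [qNum_natCast_add_one hq1, sum_range_succ']
  simpa using sum_nonneg fun i _ => pow_nonneg hq0 (i + 1)

theorem qFact_pos (hq0 : 0 ≤ q) (hq1 : q ≠ 1) (n : ℕ) : 0 < qFact q n :=
  prod_pos fun i _ => one_pos.trans_le (one_le_qNum_natCast_add_one hq0 hq1 i)

def qExpCoeff (q : ℝ) (j : ℕ) : ℝ := q ^ (j * (j - 1) / 2) / qFact q j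

theorem qExpCoeff_pos (hq0 : 0 < q) (hq1 : q ≠ 1) (j : ℕ) : 0 < qExpCoeff q j :=
  div_pos (pow_pos hq0 _) (qFact_pos hq0.le hq1 j)

theorem qExpCoeff_succ_mul_qNum (hq0 : 0 ≤ q) (hq1 : q ≠ 1) (j : ℕ) :
    qExpCoeff q (j + 1) * qNum q ((j : ℝ) + 1) = q ^ j * qExpCoeff q j := by
  have hnum := (one_pos.trans_le (one_le_qNum_natCast_add_one hq0 hq1 j)).ne'
  rw [qExpCoeff, qExpCoeff, qFact, prod_range_succ, ← qFact, Nat.triangle_succ, pow_add]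
  field_simp

theorem qExpE_eq_ofScalarsSum : qExpE q = ofScalarsSum (qExpCoeff q) := by
  ext t
  rw [ofScalarsSum_eq_tsum, qExpE]
  exact tsum_congr fun j => by rw [qExpCoeff, smul_eq_mul, mul_div_right_comm]

theorem radius_ofScalars_qExpCoeff (hq0 : 0 < q) (hq1 : q < 1) :
    (ofScalars ℝ (qExpCoeff q)).radius = ⊤ := by
  refine ofScalars_radius_eq_top_of_tendsto ℝ _
    (Eventually.of_forall fun j => (qExpCoeff_pos hq0 hq1.ne j).ne') ?_
  refine squeeze_zero (fun j => by positivity) (fun j => ?_)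
    (tendsto_pow_atTop_nhds_zero_of_lt_one hq0.le hq1)
  have hj := qExpCoeff_pos hq0 hq1.ne j
  have hsucc := qExpCoeff_pos hq0 hq1.ne (j + 1)
  rw [Real.norm_of_nonneg hsucc.le, Real.norm_of_nonneg hj.le, div_le_iff₀ hj,
    ← qExpCoeff_succ_mul_qNum hq0.le hq1.ne]
  exact le_mul_of_one_le_right hsucc.le (one_le_qNum_natCast_add_one hq0.le hq1.ne j)

theorem hasSum_qExpE (hq0 : 0 < q) (hq1 : q < 1) (t : ℝ) :
    HasSum (fun j => qExpCoeff q j * t ^ j) (qExpE q t) := by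
  have := (ofScalars ℝ (qExpCoeff q)).summable (x := t)
    (by simp [radius_ofScalars_qExpCoeff hq0 hq1])
  rw [qExpE_eq_ofScalarsSum, ofScalars_sum_eq]
  simpa only [ofScalars_apply_eq, smul_eq_mul] using this.hasSum

theorem continuous_qExpE (hq0 : 0 < q) (hq1 : q < 1) : Continuous (qExpE q) := by
  rw [← continuousOn_univ, qExpE_eq_ofScalarsSum, ofScalarsSum,
    ← Metric.eball_top 0, ← radius_ofScalars_qExpCoeff hq0 hq1]
  exact FormalMultilinearSeries.continuousOn

theorem qExpE_zero : qExpE q 0 = 1 := by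
  rw [qExpE, tsum_eq_single 0 fun j hj => by simp [hj]]
  simp [qFact]

theorem qExpE_eq_mul_qExpE_mul (hq0 : 0 < q) (hq1 : q < 1) (t : ℝ) :
    qExpE q t = (1 + (1 - q) * t) * qExpE q (q * t) := by
  have hdiff : HasSum (fun j => qExpCoeff q j * t ^ j - qExpCoeff q j * (q * t) ^ j)
      ((1 - q) * t * qExpE q (q * t)) := by
    rw [← hasSum_nat_add_iff' 1]
    simp only [range_one, sum_singleton, pow_zero, sub_self, sub_zero]
    refine ((hasSum_qExpE hq0 hq1 (q * t)).mul_left ((1 - q) * t)).congr_fun fun j => ?_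
    have hrec := qExpCoeff_succ_mul_qNum hq0.le hq1.ne j
    rw [qNum_natCast_add_one hq1.ne] at hrec
    linear_combination t ^ (j + 1) * (1 - q) * hrec
      - qExpCoeff q (j + 1) * t ^ (j + 1) * mul_neg_geom_sum q (j + 1)
  linear_combination ((hasSum_qExpE hq0 hq1 t).sub (hasSum_qExpE hq0 hq1 (q * t))).unique hdiff

theorem qExpE_neg_zpow_mul_eq_mul (hq0 : 0 < q) (hq1 : q < 1) (γ : ℝ) (k : ℤ) :
    qExpE q (-(q ^ k * γ)) = (1 - (1 - q) * (q ^ k * γ)) * qExpE q (-(q ^ (k + 1) * γ)) := by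
  rw [qExpE_eq_mul_qExpE_mul hq0 hq1, zpow_add_one₀ hq0.ne']
  ring_nf

theorem qExpE_neg_zpow_mul_eq_zero (hq0 : 0 < q) (hq1 : q < 1) {j k : ℤ} (hkj : k + j ≤ 0) :
    qExpE q (-(q ^ k * (q ^ j / (1 - q)))) = 0 := by
  refine eq_zero_of_le_of_forall_eq_mul_add_one (qExpE_neg_zpow_mul_eq_mul hq0 hq1 _) (k₀ := -j)
    ?_ (by lia)
  rw [mul_div_assoc', ← zpow_add₀ hq0.ne', neg_add_cancel, zpow_zero,
    mul_one_div_cancel (sub_ne_zero.2 hq1.ne'), sub_self]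

theorem jacksonInf_qExpE_neg_eq_jackson (hq0 : 0 < q) (hq1 : q < 1) (j : ℤ) :
    jacksonInf q (q ^ j / (1 - q)) (fun t => qExpE q (-t)) =
      jackson q (1 / (1 - q)) (fun t => qExpE q (-t)) := by
  set f : ℤ → ℝ := fun k => qExpE q (-(q ^ k * (q ^ j / (1 - q)))) * q ^ k
  have hsupp : Function.support f ⊆ Set.range fun n : ℕ => (n : ℤ) - j := by
    intro k hk
    have hkj : 0 < k + j := by
      by_contra hkj
      exact hk (mul_eq_zero_of_left (qExpE_neg_zpow_mul_eq_zero hq0 hq1 (by lia)) _)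
    exact ⟨(k + j).toNat, by lia⟩
  have hterm : ∀ n : ℕ, f (n - j) = qExpE q (-(q ^ n * (1 / (1 - q)))) * q ^ n * q ^ (-j) := by
    intro n
    simp only [f, zpow_sub₀ hq0.ne', zpow_natCast, zpow_neg]
    field_simp
  have hsum : ∑' k : ℤ, f k =
      (∑' n : ℕ, qExpE q (-(q ^ n * (1 / (1 - q)))) * q ^ n) * q ^ (-j) := by
    have hinj : Function.Injective fun n : ℕ => (n : ℤ) - j := fun m n h => by simpa using h
    rw [← hinj.tsum_eq hsupp, ← tsum_mul_right]
    exact tsum_congr hterm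
  change (1 - q) * (q ^ j / (1 - q)) * ∑' k, f k = _
  rw [hsum, jackson, zpow_neg]
  field_simp

theorem qExpE_neg_zpow_mul_ne_zero (hq0 : 0 < q) (hq1 : q < 1) {γ : ℝ}
    (hγ : ∀ j : ℤ, γ ≠ q ^ j / (1 - q)) (k : ℤ) : qExpE q (-(q ^ k * γ)) ≠ 0 := by
  refine ne_zero_of_forall_eq_mul_add_one (qExpE_neg_zpow_mul_eq_mul hq0 hq1 γ)
    (fun k hk => hγ (-k) ?_) ?_ k
  · rw [zpow_neg, eq_div_iff (sub_ne_zero.2 hq1.ne')]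
    field_simp
    linear_combination -hk
  · have harg : Tendsto (fun n : ℕ => -(q ^ n * γ)) atTop (𝓝 0) := by
      simpa using ((tendsto_pow_atTop_nhds_zero_of_lt_one hq0.le hq1).mul_const γ).neg
    have hlim : Tendsto (fun n : ℕ => qExpE q (-(q ^ n * γ))) atTop (𝓝 1) := by
      simpa [qExpE_zero, Function.comp_def] using ((continuous_qExpE hq0 hq1).tendsto 0).comp harg
    have hfreq : ∃ᶠ n : ℕ in atTop, qExpE q (-(q ^ (n : ℤ) * γ)) ≠ 0 := by
      simpa only [zpow_natCast] using (hlim.eventually_ne one_ne_zero).frequently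
    exact tendsto_natCast_atTop_atTop.frequently hfreq

theorem not_tendsto_qExpE_neg_zpow_mul_mul_zpow (hq0 : 0 < q) (hq1 : q < 1) {γ : ℝ}
    (hγ0 : 0 < γ) (hγ : ∀ j : ℤ, γ ≠ q ^ j / (1 - q)) :
    ¬ Tendsto (fun k : ℤ => qExpE q (-(q ^ k * γ)) * q ^ k) atBot (𝓝 0) := by
  have h1q : 0 < 1 - q := sub_pos.2 hq1
  obtain ⟨n, hn⟩ := exists_pow_lt_of_lt_one (by positivity : 0 < (1 - q) * γ / 2) hq1
  refine not_tendsto_atBot_zero_of_norm_le_norm (K := -n)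
    (mul_ne_zero (qExpE_neg_zpow_mul_ne_zero hq0 hq1 hγ _) (zpow_pos hq0 _).ne') fun k hk => ?_
  have hqk : (q ^ n)⁻¹ ≤ q ^ k := by
    simpa using zpow_le_zpow_right_of_le_one₀ hq0 hq1.le hk.le
  have hlarge : 2 ≤ (1 - q) * (q ^ k * γ) := by
    have h1 : 1 ≤ q ^ n * q ^ k := by
      simpa [(pow_pos hq0 n).ne'] using mul_le_mul_of_nonneg_left hqk (pow_pos hq0 n).le
    nlinarith [zpow_pos hq0 k]
  have hc : q ≤ ‖1 - (1 - q) * (q ^ k * γ)‖ := by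
    rw [Real.norm_of_nonpos (by linarith)]
    linarith
  rw [qExpE_neg_zpow_mul_eq_mul hq0 hq1 γ k]
  set E := qExpE q (-(q ^ (k + 1) * γ))
  rw [zpow_add_one₀ hq0.ne', norm_mul, norm_mul, norm_mul, norm_mul, Real.norm_of_nonneg hq0.le]
  calc ‖E‖ * (‖q ^ k‖ * q) = q * (‖E‖ * ‖q ^ k‖) := by ring
    _ ≤ ‖1 - (1 - q) * (q ^ k * γ)‖ * (‖E‖ * ‖q ^ k‖) := by gcongr
    _ = _ := by ring

end QExp

/-- divergence and reduction of `∫_0^{γ·∞} E_q(-t) d_q t` for `γ > 0`.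
(a) If `γ ≠ q^j/(1-q)` for all `j ∈ ℤ`, the bilateral series `∑_{k∈ℤ} E_q(-q^kγ) q^k`
does not converge: its terms do not tend to `0` as `k → -∞` (hence it is not summable).
(b) If `γ = q^j/(1-q)` for some `j ∈ ℤ`, then `E_q(-q^kγ) = 0` whenever `k + j < 0`, and
`(1-q)γ ∑_{k∈ℤ} E_q(-q^kγ) q^k = ∑_{l=0}^∞ E_q(-q^l/(1-q)) q^l`, i.e.
`∫_0^{γ·∞} E_q(-t) d_q t = ∫_0^{1/(1-q)} E_q(-t) d_q t`. -/
theorem qExpE_jacksonInf (q : ℝ) (hq0 : 0 < q) (hq1 : q < 1) (γ : ℝ) (hγ : 0 < γ) :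
    ((∀ j : ℤ, γ ≠ q ^ j / (1 - q)) →
      ¬ Filter.Tendsto (fun k : ℤ => qExpE q (-(q ^ k * γ)) * q ^ k)
          Filter.atBot (nhds 0) ∧
      ¬ Summable (fun k : ℤ => qExpE q (-(q ^ k * γ)) * q ^ k)) ∧
    (∀ j : ℤ, γ = q ^ j / (1 - q) →
      (∀ k : ℤ, k + j < 0 → qExpE q (-(q ^ k * γ)) = 0) ∧
      (1 - q) * γ * ∑' k : ℤ, qExpE q (-(q ^ k * γ)) * q ^ k =
        ∑' l : ℕ, qExpE q (-(q ^ l / (1 - q))) * q ^ l) := by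
  refine ⟨fun hγj => ?_, fun j hj => ?_⟩
  · have hnot := not_tendsto_qExpE_neg_zpow_mul_mul_zpow hq0 hq1 hγ hγj
    refine ⟨hnot, fun hsum => hnot ?_⟩
    exact (Int.cofinite_eq ▸ hsum.tendsto_cofinite_zero).mono_left le_sup_left
  subst hj
  refine ⟨fun k hk => qExpE_neg_zpow_mul_eq_zero hq0 hq1 hk.le, ?_⟩
  have h := jacksonInf_qExpE_neg_eq_jackson hq0 hq1 j
  rw [jacksonInf, jackson, mul_one_div_cancel (sub_ne_zero.2 hq1.ne'), one_mul] at h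
  simpa only [mul_one_div] using h
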